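/- The group G_2 = ⟨x, y | x y^{-1} x^{-1} y x = y^{-2} x y x^{-1} y^{-1} x y^2⟩ is not isomorphic to G_{1,r} = ⟨x, y | x^{-r} y^{-1} x y x^r = y^{-2} x^r y x y^{-1} x^{-r} y^2⟩ for any positive integer r. -/

import Mathlib

namespace Stmt8

abbrev F := FreeGroup (Fin 2)

def x : F := FreeGroup.of 0
def y : F := FreeGroup.of 1

/-- The relator of `G₂`. -/
def R2 : F :=
  x * y⁻¹ * x⁻¹ * y * x * (y⁻¹ * y⁻¹ * x * y * x⁻¹ * y⁻¹ * x * y * y)⁻¹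

/-- The relator of `G_{1,r}`. -/
def R1 (r : ℕ) : F :=
  (x ^ r)⁻¹ * y⁻¹ * x * y * x ^ r *
    (y⁻¹ * y⁻¹ * x ^ r * y * x * y⁻¹ * (x ^ r)⁻¹ * y * y)⁻¹

abbrev G2 := PresentedGroup ({R2} : Set F)
abbrev G1 (r : ℕ) := PresentedGroup ({R1 r} : Set F)

/-!
Count homomorphisms into the Frobenius group `F₂₁ = ℤ/7 ⋊ ℤ/3`, in which the generator of `ℤ/3`
acts on `ℤ/7` by multiplication by `2`; such a homomorphism is a pair `(a, b)` of images of
`x, y` killing the relator. For `G_{1,r}` every pair with `a` in the abelian normal subgroup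
`ℤ/7` qualifies, because `a ^ r` then commutes with the conjugates `b⁻¹ a b` and `b a b⁻¹`: this
gives at least `7 * 21 = 147` homomorphisms. A finite computation finds only `105` for `G₂`.

In terms of the metabelian quotients: `(1 - x⁻ʳ)(y - xʳ)` vanishes whenever `x` maps into `ℤ/7`,
whereas `2(1 + y)` is a unit whatever the image of `y`, as `-1` is not a power of `2` modulo `7`.
-/

def _root_.PresentedGroup.homEquiv {α G : Type*} [Group G] (rels : Set (FreeGroup α)) :
    (PresentedGroup rels →* G) ≃ {f : α → G // ∀ r ∈ rels, FreeGroup.lift f r = 1} where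
  toFun φ := ⟨φ ∘ PresentedGroup.of, fun r hr => by
    rw [← FreeGroup.lift_unique (f := φ ∘ PresentedGroup.of) (φ.comp (PresentedGroup.mk rels))
      fun _ => rfl, MonoidHom.comp_apply, PresentedGroup.one_of_mem hr, map_one]⟩
  invFun f := PresentedGroup.toGroup f.2
  left_inv φ := PresentedGroup.ext fun _ => PresentedGroup.toGroup.of _
  right_inv f := Subtype.ext <| funext fun _ => PresentedGroup.toGroup.of _

theorem card_hom_presentedGroup_singleton (Q : Type*) [Group Q] (R : F) :
    Nat.card (PresentedGroup ({R} : Set F) →* Q) =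
      Nat.card {p : Q × Q // FreeGroup.lift ![p.1, p.2] R = 1} := by
  rw [Nat.card_congr (PresentedGroup.homEquiv _)]
  simp only [Set.mem_singleton_iff, forall_eq]
  exact Nat.card_congr ((finTwoArrowEquiv Q).symm.subtypeEquiv fun _ => Iff.rfl).symm

theorem lift_R1_eq_one_of_mem {Q : Type*} [Group Q] (N : Subgroup Q) [N.Normal]
    [IsMulCommutative N] (r : ℕ) (f : Fin 2 → Q) (hf : f 0 ∈ N) :
    FreeGroup.lift f (R1 r) = 1 := by
  simp only [R1, x, y, map_mul, map_inv, map_pow, FreeGroup.lift_apply_of]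
  generalize f 0 = a at hf ⊢
  generalize f 1 = b
  have hc : a ^ r ∈ N := pow_mem hf r
  have h1 := setLike_mul_comm hc (‹N.Normal›.conj_mem a hf b⁻¹)
  have h2 := setLike_mul_comm hc (‹N.Normal›.conj_mem a hf b)
  rw [inv_inv] at h1
  generalize a ^ r = c at h1 h2 ⊢
  rw [mul_inv_eq_one]
  calc c⁻¹ * b⁻¹ * a * b * c = c⁻¹ * (b⁻¹ * a * b * c) := by group
    _ = b⁻¹ * a * b := by rw [← h1]; group
    _ = b⁻¹ * b⁻¹ * (b * a * b⁻¹ * c) * c⁻¹ * b * b := by group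
    _ = _ := by rw [← h2]; group

theorem card_mul_card_le_card_hom_G1 {Q : Type*} [Group Q] [Finite Q] (N : Subgroup Q)
    [N.Normal] [IsMulCommutative N] (r : ℕ) : Nat.card N * Nat.card Q ≤ Nat.card (G1 r →* Q) := by
  rw [card_hom_presentedGroup_singleton, ← Nat.card_prod]
  refine Nat.card_le_card_of_injective
    (fun p => ⟨(p.1, p.2), lift_R1_eq_one_of_mem N r _ p.1.2⟩) fun p q h => ?_
  simp only [Subtype.mk.injEq, Prod.mk.injEq] at h
  exact Prod.ext (Subtype.ext h.1) h.2

instance _root_.SemidirectProduct.instFintype {N G : Type*} [Group N] [Group G]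
    {φ : G →* MulAut N} [Fintype N] [Fintype G] : Fintype (N ⋊[φ] G) :=
  Fintype.ofEquiv _ SemidirectProduct.equivProd.symm

instance _root_.SemidirectProduct.range_inl_normal {N G : Type*} [Group N] [Group G]
    {φ : G →* MulAut N} : (SemidirectProduct.inl : N →* N ⋊[φ] G).range.Normal := by
  rw [SemidirectProduct.range_inl_eq_ker_rightHom]
  exact MonoidHom.normal_ker _

theorem _root_.SemidirectProduct.card_range_inl {N G : Type*} [Group N] [Group G]
    {φ : G →* MulAut N} : Nat.card (SemidirectProduct.inl : N →* N ⋊[φ] G).range = Nat.card N :=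
  (Nat.card_congr (MonoidHom.ofInjective SemidirectProduct.inl_injective).toEquiv).symm

def frobeniusAction : Multiplicative (ZMod 3) →* MulAut (Multiplicative (ZMod 7)) :=
  (MulAutMultiplicative (ZMod 7)).symm.toMonoidHom.comp <| AddAut.mulLeft.comp
    { toFun := fun i => ZMod.unitOfCoprime 2 (by decide) ^ (Multiplicative.toAdd i).val
      map_one' := rfl
      map_mul' := by decide }

abbrev Frobenius21 := Multiplicative (ZMod 7) ⋊[frobeniusAction] Multiplicative (ZMod 3)

theorem card_hom_G2_frobenius21 : Nat.card (G2 →* Frobenius21) = 105 := by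
  rw [card_hom_presentedGroup_singleton]
  simp only [R2, x, y, map_mul, map_inv, FreeGroup.lift_apply_of, Matrix.cons_val_zero,
    Matrix.cons_val_one]
  rw [Nat.card_eq_fintype_card]
  set_option maxRecDepth 10000 in decide

theorem not_isomorphic_general (r : ℕ) : IsEmpty (G2 ≃* G1 r) := by
  refine ⟨fun e => ?_⟩
  have h := card_mul_card_le_card_hom_G1 (SemidirectProduct.inl : _ →* Frobenius21).range r
  rw [← Nat.card_congr e.monoidHomCongrLeftEquiv, card_hom_G2_frobenius21,
    SemidirectProduct.card_range_inl, SemidirectProduct.card] at h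
  norm_num at h

theorem not_isomorphic (r : ℕ) (hr : 0 < r) : IsEmpty (G2 ≃* G1 r) :=
  not_isomorphic_general r

end Stmt8
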